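/- arXiv:2407.21081 — 3 statements merged into one kernel-verified Lean document; each statement's English description precedes it below -/
import Mathlib

section
/- Let f : ℝ → ℝ be continuous and concave on [a,b] with a ≤ a₁ < a₂ < b. Then the maximum absolute error satisfies E(a₂,b) ≤ E(a₁,b). (Fixing the right endpoint of an interval, the maximal absolute error of the secant approximation does not increase when the interval shrinks.) -/
/-- The secant line of `f` through `(u, f u)` and `(v, f v)`. -/
noncomputable def secant (f : ℝ → ℝ) (u v : ℝ) (x : ℝ) : ℝ :=
  f u + ((f v - f u) / (v - u)) * (x - u)

/-- The maximum absolute error of the secant approximation of `f` on `[u, v]`: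
`E(u,v) = sup_{x ∈ [u,v]} (f x - L_{u,v} x)`. -/
noncomputable def maxErr (f : ℝ → ℝ) (u v : ℝ) : ℝ :=
  sSup ((fun x => f x - secant f u v x) '' Set.Icc u v)

lemma secant_cont (f : ℝ → ℝ) (u v : ℝ) : Continuous (secant f u v) := by
  unfold secant; continuity

lemma slope_le (f : ℝ → ℝ) (a b a₁ a₂ : ℝ)
    (hconc : ConcaveOn ℝ (Set.Icc a b) f)
    (haa₁ : a ≤ a₁) (ha₁a₂ : a₁ < a₂) (ha₂b : a₂ < b) :
    (f b - f a₂) / (b - a₂) ≤ (f b - f a₁) / (b - a₁) := by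
  have h1 : a₁ ∈ Set.Icc a b := ⟨haa₁, by linarith⟩
  have hb : b ∈ Set.Icc a b := ⟨by linarith, le_rfl⟩
  set t : ℝ := (b - a₂) / (b - a₁) with ht
  have hba₁ : (0:ℝ) < b - a₁ := by linarith
  have hba₂ : (0:ℝ) < b - a₂ := by linarith
  have ht0 : 0 ≤ t := by positivity
  have ht1 : t ≤ 1 := by rw [ht, div_le_one hba₁]; linarith
  have hsum : t + (1 - t) = 1 := by ring
  have hcomb := hconc.2 h1 hb ht0 (by linarith) hsum
  have hx : t • a₁ + (1 - t) • b = a₂ := by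
    simp only [smul_eq_mul]; rw [ht, div_mul_eq_mul_div, one_sub_div hba₁.ne', div_mul_eq_mul_div, ← add_div, div_eq_iff hba₁.ne']; ring
  rw [hx] at hcomb
  simp only [smul_eq_mul] at hcomb
  rw [div_le_div_iff₀ hba₂ hba₁]
  have ht' : t * (b - a₁) = b - a₂ := by rw [ht]; exact div_mul_cancel₀ _ hba₁.ne'
  have h3 : t * (b - a₁) * f a₁ = (b - a₂) * f a₁ := by rw [ht']
  have h4 : t * (b - a₁) * f b = (b - a₂) * f b := by rw [ht']
  have h5 := mul_le_mul_of_nonneg_right hcomb (le_of_lt hba₁)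
  nlinarith [h3, h4, h5]

lemma secant_le (f : ℝ → ℝ) (a b a₁ a₂ : ℝ)
    (hconc : ConcaveOn ℝ (Set.Icc a b) f)
    (haa₁ : a ≤ a₁) (ha₁a₂ : a₁ < a₂) (ha₂b : a₂ < b) :
    ∀ x ∈ Set.Icc a₂ b, secant f a₁ b x ≤ secant f a₂ b x := by
  intro x hx
  have hs := slope_le f a b a₁ a₂ hconc haa₁ ha₁a₂ ha₂b
  have hba₁ : (0:ℝ) < b - a₁ := by linarith
  have hba₂ : (0:ℝ) < b - a₂ := by linarith
  -- rewrite secants through (b, f b)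
  have e1 : secant f a₁ b x = f b - ((f b - f a₁)/(b - a₁)) * (b - x) := by
    unfold secant; field_simp; ring
  have e2 : secant f a₂ b x = f b - ((f b - f a₂)/(b - a₂)) * (b - x) := by
    unfold secant; field_simp; ring
  rw [e1, e2]
  have hbx : 0 ≤ b - x := by linarith [hx.2]
  nlinarith [mul_le_mul_of_nonneg_right hs hbx]

/-- Fixing the right endpoint, the maximal absolute error does not
increase when the interval shrinks. -/
theorem secant_error_mono_left (f : ℝ → ℝ) (a b a₁ a₂ : ℝ)
    (hab : a < b)
    (hf : ContinuousOn f (Set.Icc a b))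
    (hconc : ConcaveOn ℝ (Set.Icc a b) f)
    (haa₁ : a ≤ a₁) (ha₁a₂ : a₁ < a₂) (ha₂b : a₂ < b) :
    maxErr f a₂ b ≤ maxErr f a₁ b := by
  have hsub : Set.Icc a₁ b ⊆ Set.Icc a b := Set.Icc_subset_Icc haa₁ le_rfl
  have hsub2 : Set.Icc a₂ b ⊆ Set.Icc a₁ b := Set.Icc_subset_Icc (le_of_lt ha₁a₂) le_rfl
  have hg1 : ContinuousOn (fun x => f x - secant f a₁ b x) (Set.Icc a₁ b) :=
    (hf.mono hsub).sub (secant_cont f a₁ b).continuousOn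
  have hbdd : BddAbove ((fun x => f x - secant f a₁ b x) '' Set.Icc a₁ b) :=
    (isCompact_Icc.image_of_continuousOn hg1).bddAbove
  have hne : ((fun x => f x - secant f a₂ b x) '' Set.Icc a₂ b).Nonempty :=
    ⟨_, ⟨a₂, ⟨le_rfl, le_of_lt ha₂b⟩, rfl⟩⟩
  unfold maxErr
  apply csSup_le hne
  rintro y ⟨x, hx, rfl⟩
  have h1 : f x - secant f a₂ b x ≤ f x - secant f a₁ b x := by
    have := secant_le f a b a₁ a₂ hconc haa₁ ha₁a₂ ha₂b x hx
    linarith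
  exact h1.trans (le_csSup hbdd ⟨x, hsub2 hx, rfl⟩)
end

section
/- Let f : ℝ → ℝ be continuous and strictly concave on [x₁, x_N], N ≥ 3, and let x₁ < x₂ < ⋯ < x_N be breakpoints with x₁, x_N fixed. Then all interval maximum absolute errors are equal (E(x_i, x_{i+1}) is the same for all i) if and only if for every interior index i ∈ {2, …, N-1}, the point x_i minimizes the function c ↦ max(E(x_{i-1}, c), E(c, x_{i+1})) over (x_{i-1}, x_{i+1}). -/
open Set Filter Topology


section aux
variable {f : ℝ → ℝ} {a b u v w c : ℝ}

lemma secant_left : secant f u v u = f u := by simp [secant]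

lemma secant_right (h : u < v) : secant f u v v = f v := by
  have h0 : v - u ≠ 0 := sub_ne_zero.2 h.ne'
  unfold secant
  field_simp
  ring

lemma secant_rform (h : u < v) (y : ℝ) :
    secant f u v y = f v + ((f v - f u) / (v - u)) * (y - v) := by
  have h0 : v - u ≠ 0 := sub_ne_zero.2 h.ne'
  unfold secant
  field_simp
  ring

lemma continuousOn_err (hf : ContinuousOn f (Icc a b)) (hsub : Icc u v ⊆ Icc a b) :
    ContinuousOn (fun y => f y - secant f u v y) (Icc u v) := by
  apply (hf.mono hsub).sub
  unfold secant
  fun_prop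

lemma bddAbove_err (hf : ContinuousOn f (Icc a b)) (hsub : Icc u v ⊆ Icc a b) :
    BddAbove ((fun y => f y - secant f u v y) '' Icc u v) :=
  (isCompact_Icc.image_of_continuousOn (continuousOn_err hf hsub)).bddAbove

lemma le_maxErr (hf : ContinuousOn f (Icc a b)) (hsub : Icc u v ⊆ Icc a b)
    (hx : c ∈ Icc u v) : f c - secant f u v c ≤ maxErr f u v :=
  le_csSup (bddAbove_err hf hsub) (mem_image_of_mem _ hx)

lemma maxErr_nonneg (hf : ContinuousOn f (Icc a b)) (hsub : Icc u v ⊆ Icc a b)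
    (huv : u ≤ v) : 0 ≤ maxErr f u v := by
  have := le_maxErr hf hsub (c := u) ⟨le_refl u, huv⟩
  rwa [secant_left, sub_self] at this

lemma exists_maximizer (huv : u < v) (hf : ContinuousOn f (Icc a b))
    (hsub : Icc u v ⊆ Icc a b) :
    ∃ m ∈ Icc u v, (∀ y ∈ Icc u v, f y - secant f u v y ≤ f m - secant f u v m) ∧
      maxErr f u v = f m - secant f u v m := by
  obtain ⟨m, hm, hmax⟩ := isCompact_Icc.exists_isMaxOn (nonempty_Icc.2 huv.le)
    (continuousOn_err hf hsub)
  have hmax' : ∀ y ∈ Icc u v, f y - secant f u v y ≤ f m - secant f u v m :=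
    fun y hy => hmax hy
  refine ⟨m, hm, hmax', ?_⟩
  apply IsGreatest.csSup_eq ⟨mem_image_of_mem _ hm, ?_⟩
  rintro _ ⟨y, hy, rfl⟩
  exact hmax' y hy

lemma maxErr_pos (hconc : StrictConcaveOn ℝ (Icc a b) f) (hf : ContinuousOn f (Icc a b))
    (hsub : Icc u v ⊆ Icc a b) (huv : u < v) : 0 < maxErr f u v := by
  set m := (u + v) / 2 with hm
  have hmem : m ∈ Icc u v := ⟨by simp only [hm]; linarith, by simp only [hm]; linarith⟩
  have hu : u ∈ Icc a b := hsub ⟨le_refl u, huv.le⟩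
  have hv : v ∈ Icc a b := hsub ⟨huv.le, le_refl v⟩
  have h := hconc.2 hu hv huv.ne (by norm_num : (0:ℝ) < 1/2) (by norm_num : (0:ℝ) < 1/2)
    (by norm_num : (1:ℝ)/2 + 1/2 = 1)
  simp only [smul_eq_mul] at h
  have hms : secant f u v m = (f u + f v) / 2 := by
    have h0 : v - u ≠ 0 := sub_ne_zero.2 huv.ne'
    unfold secant
    rw [hm]
    field_simp
    ring
  have harg : (1:ℝ)/2 * u + (1:ℝ)/2 * v = m := by rw [hm]; ring
  rw [harg] at h
  have herr : 0 < f m - secant f u v m := by rw [hms]; linarith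
  exact lt_of_lt_of_le herr (le_maxErr hf hsub hmem)

lemma secKey (hconc : StrictConcaveOn ℝ (Icc a b) f) (hu : u ∈ Icc a b) (hw : w ∈ Icc a b)
    (huv : u < v) (hvw : v < w) :
    f u * (w - v) + f w * (v - u) < f v * (w - u) := by
  have h := hconc.slope_anti_adjacent hu hw huv hvw
  rw [div_lt_div_iff₀ (by linarith) (by linarith)] at h
  nlinarith [h]

lemma slope_uw_lt_uv (hconc : StrictConcaveOn ℝ (Icc a b) f) (hu : u ∈ Icc a b)
    (hw : w ∈ Icc a b) (huv : u < v) (hvw : v < w) :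
    (f w - f u) / (w - u) < (f v - f u) / (v - u) := by
  rw [div_lt_div_iff₀ (by linarith) (by linarith)]
  nlinarith [secKey hconc hu hw huv hvw]

lemma slope_vw_lt_uw (hconc : StrictConcaveOn ℝ (Icc a b) f) (hu : u ∈ Icc a b)
    (hw : w ∈ Icc a b) (huv : u < v) (hvw : v < w) :
    (f w - f v) / (w - v) < (f w - f u) / (w - u) := by
  rw [div_lt_div_iff₀ (by linarith) (by linarith)]
  nlinarith [secKey hconc hu hw huv hvw]

end aux
section mono
variable {f : ℝ → ℝ} {a b u v w c : ℝ}

lemma maxErr_lt_left (hconc : StrictConcaveOn ℝ (Icc a b) f) (hf : ContinuousOn f (Icc a b))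
    (hsub : Icc u w ⊆ Icc a b) (huv : u < v) (hvw : v < w) :
    maxErr f u v < maxErr f u w := by
  have hsub1 : Icc u v ⊆ Icc a b := (Icc_subset_Icc le_rfl hvw.le).trans hsub
  obtain ⟨m, hm, _, hEq⟩ := exists_maximizer huv hf hsub1
  have hpos : 0 < maxErr f u v := maxErr_pos hconc hf hsub1 huv
  have hmu : u < m := by
    refine lt_of_le_of_ne hm.1 (fun h => absurd hpos ?_)
    rw [hEq, ← h, secant_left, sub_self]; exact lt_irrefl 0
  have hu : u ∈ Icc a b := hsub ⟨le_refl u, (huv.trans hvw).le⟩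
  have hw : w ∈ Icc a b := hsub ⟨(huv.trans hvw).le, le_refl w⟩
  have hs := slope_uw_lt_uv hconc hu hw huv hvw
  have key : secant f u w m < secant f u v m := by
    unfold secant
    nlinarith [hs, hmu]
  calc maxErr f u v = f m - secant f u v m := hEq
    _ < f m - secant f u w m := by linarith
    _ ≤ maxErr f u w := le_maxErr hf hsub ⟨hm.1, hm.2.trans hvw.le⟩

lemma maxErr_lt_right (hconc : StrictConcaveOn ℝ (Icc a b) f) (hf : ContinuousOn f (Icc a b))
    (hsub : Icc u w ⊆ Icc a b) (huv : u < v) (hvw : v < w) :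
    maxErr f v w < maxErr f u w := by
  have hsub1 : Icc v w ⊆ Icc a b := (Icc_subset_Icc huv.le le_rfl).trans hsub
  obtain ⟨m, hm, _, hEq⟩ := exists_maximizer hvw hf hsub1
  have hpos : 0 < maxErr f v w := maxErr_pos hconc hf hsub1 hvw
  have hmw : m < w := by
    refine lt_of_le_of_ne hm.2 (fun h => absurd hpos ?_)
    rw [hEq, h, secant_right hvw, sub_self]; exact lt_irrefl 0
  have hu : u ∈ Icc a b := hsub ⟨le_refl u, (huv.trans hvw).le⟩
  have hw : w ∈ Icc a b := hsub ⟨(huv.trans hvw).le, le_refl w⟩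
  have hs := slope_vw_lt_uw hconc hu hw huv hvw
  have key : secant f u w m < secant f v w m := by
    rw [secant_rform (huv.trans hvw), secant_rform hvw]
    nlinarith [hs, hmw]
  calc maxErr f v w = f m - secant f v w m := hEq
    _ < f m - secant f u w m := by linarith
    _ ≤ maxErr f u w := le_maxErr hf hsub ⟨huv.le.trans hm.1, hm.2⟩

end mono
section bound
variable {f : ℝ → ℝ} {a b u v w c : ℝ}

/-- Right-perturbation bound: for `u < v < c ≤ w`,
`E(u,c) ≤ E(u,v) + (s_{uv} - s_{uc})(w-u)`. -/
lemma maxErr_le_right_bound (hconc : StrictConcaveOn ℝ (Icc a b) f)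
    (hf : ContinuousOn f (Icc a b)) (hsub : Icc u w ⊆ Icc a b)
    (huv : u < v) (hvc : v < c) (hcw : c ≤ w) :
    maxErr f u c ≤ maxErr f u v +
      ((f v - f u) / (v - u) - (f c - f u) / (c - u)) * (w - u) := by
  have huw : u < w := huv.trans (hvc.trans_le hcw)
  have hu : u ∈ Icc a b := hsub ⟨le_refl u, huw.le⟩
  have hw : w ∈ Icc a b := hsub ⟨huw.le, le_refl w⟩
  have hc : c ∈ Icc a b := hsub ⟨(huv.trans hvc).le, hcw⟩
  have hsubv : Icc u v ⊆ Icc a b := (Icc_subset_Icc le_rfl (hvc.le.trans hcw)).trans hsub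
  have hsubc : Icc u c ⊆ Icc a b := (Icc_subset_Icc le_rfl hcw).trans hsub
  set s1 := (f v - f u) / (v - u) with hs1
  set s2 := (f c - f u) / (c - u) with hs2
  have hs : s2 < s1 := slope_uw_lt_uv hconc hu hc huv hvc
  have hE0 : 0 ≤ maxErr f u v := maxErr_nonneg hf hsubv huv.le
  apply csSup_le ((nonempty_Icc.2 (huv.trans hvc).le).image _)
  rintro _ ⟨y, hy, rfl⟩
  show f y - secant f u c y ≤ _
  have hyw : y - u ≤ w - u := by have := hy.2; linarith
  have hyu : 0 ≤ y - u := by have := hy.1; linarith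
  rcases le_total y v with h | h
  · have h1 : f y - secant f u v y ≤ maxErr f u v := le_maxErr hf hsubv ⟨hy.1, h⟩
    have h2 : f y - secant f u c y = (f y - secant f u v y) + (s1 - s2) * (y - u) := by
      simp only [secant, ← hs1, ← hs2]; ring
    rw [h2]
    nlinarith [hs, hyw, hyu]
  · -- v ≤ y : use concavity to bound f y by the extended secant through u, v
    have hfy : f y ≤ f v + s1 * (y - v) := by
      rcases eq_or_lt_of_le h with h' | h'
      · rw [← h']; simp
      · have h2 := (hconc.concaveOn).slope_anti_adjacent hu (hsubc ⟨hy.1, hy.2⟩) huv h'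
        rw [div_le_div_iff₀ (by linarith) (by linarith)] at h2
        rw [hs1, div_mul_eq_mul_div, ← sub_le_iff_le_add', le_div_iff₀ (by linarith : (0:ℝ) < v - u)]
        nlinarith [h2]
    have hfvu : s1 * (v - u) = f v - f u := by
      rw [hs1]; exact div_mul_cancel₀ _ (sub_ne_zero.2 huv.ne')
    have h3 : f y - secant f u c y ≤ (s1 - s2) * (y - u) := by
      simp only [secant, ← hs2]
      nlinarith [hfy, hfvu]
    nlinarith [h3, hs, hyw, hyu, hE0]

/-- Left-perturbation bound: for `u ≤ c < v < w`,
`E(c,w) ≤ E(v,w) + (s_{cw} - s_{vw})(w-u)`. -/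
lemma maxErr_le_left_bound (hconc : StrictConcaveOn ℝ (Icc a b) f)
    (hf : ContinuousOn f (Icc a b)) (hsub : Icc u w ⊆ Icc a b)
    (huc : u ≤ c) (hcv : c < v) (hvw : v < w) :
    maxErr f c w ≤ maxErr f v w +
      ((f w - f c) / (w - c) - (f w - f v) / (w - v)) * (w - u) := by
  have huw : u < w := (huc.trans_lt hcv).trans hvw
  have hu : u ∈ Icc a b := hsub ⟨le_refl u, huw.le⟩
  have hw : w ∈ Icc a b := hsub ⟨huw.le, le_refl w⟩
  have hc : c ∈ Icc a b := hsub ⟨huc, ((hcv.trans hvw).le)⟩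
  have hsubv : Icc v w ⊆ Icc a b := (Icc_subset_Icc (huc.trans hcv.le) le_rfl).trans hsub
  have hsubc : Icc c w ⊆ Icc a b := (Icc_subset_Icc huc le_rfl).trans hsub
  set s1 := (f w - f v) / (w - v) with hs1
  set s2 := (f w - f c) / (w - c) with hs2
  have hs : s1 < s2 := slope_vw_lt_uw hconc hc hw hcv hvw
  have hE0 : 0 ≤ maxErr f v w := maxErr_nonneg hf hsubv hvw.le
  apply csSup_le ((nonempty_Icc.2 (hcv.trans hvw).le).image _)
  rintro _ ⟨y, hy, rfl⟩
  show f y - secant f c w y ≤ _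
  have hyw : w - y ≤ w - u := by have := hy.1; linarith
  have hyu : 0 ≤ w - y := by have := hy.2; linarith
  have hcw : c < w := hcv.trans hvw
  rcases le_total v y with h | h
  · have h1 : f y - secant f v w y ≤ maxErr f v w := le_maxErr hf hsubv ⟨h, hy.2⟩
    have h2 : f y - secant f c w y =
        (f y - secant f v w y) + (s2 - s1) * (w - y) := by
      rw [secant_rform hcw, secant_rform hvw, ← hs1, ← hs2]; ring
    rw [h2]
    nlinarith [hs, hyw, hyu]
  · -- y ≤ v : use concavity to bound f y by the extended secant through v, w
    have hfy : f y ≤ f v + s1 * (y - v) := by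
      rcases eq_or_lt_of_le h with h' | h'
      · rw [h']; simp
      · have h2 := (hconc.concaveOn).slope_anti_adjacent (hsubc ⟨hy.1, hy.2⟩) hw h' hvw
        rw [div_le_div_iff₀ (by linarith) (by linarith)] at h2
        rw [hs1, div_mul_eq_mul_div, ← sub_le_iff_le_add', le_div_iff₀ (by linarith : (0:ℝ) < w - v)]
        nlinarith [h2]
    have hfwv : s1 * (w - v) = f w - f v := by
      rw [hs1]; exact div_mul_cancel₀ _ (sub_ne_zero.2 hvw.ne')
    have h3 : f y - secant f c w y ≤ (s2 - s1) * (w - y) := by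
      rw [secant_rform hcw, ← hs2]
      nlinarith [hfy, hfwv]
    nlinarith [h3, hs, hyw, hyu, hE0]

end bound
section exist
variable {f : ℝ → ℝ} {a b u v w : ℝ}

lemma exists_right_pt (hconc : StrictConcaveOn ℝ (Icc a b) f)
    (hf : ContinuousOn f (Icc a b)) (hsub : Icc u w ⊆ Icc a b)
    (huv : u < v) (hvw : v < w) {M : ℝ} (hM : maxErr f u v < M) :
    ∃ c ∈ Ioo v w, maxErr f u c < M := by
  set g : ℝ → ℝ := fun c => maxErr f u v +
    ((f v - f u) / (v - u) - (f c - f u) / (c - u)) * (w - u) with hg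
  have hvmem : v ∈ Icc a b := hsub ⟨huv.le, hvw.le⟩
  have hIoo : Ioo v w ⊆ Icc a b := fun z hz => hsub ⟨(huv.trans hz.1).le, hz.2.le⟩
  have hfc : ContinuousWithinAt f (Ioo v w) v :=
    (hf.continuousWithinAt hvmem).mono hIoo
  have hgc : ContinuousWithinAt g (Ioo v w) v := by
    apply ContinuousWithinAt.add continuousWithinAt_const
    apply ContinuousWithinAt.mul _ continuousWithinAt_const
    apply ContinuousWithinAt.sub continuousWithinAt_const
    exact (hfc.sub continuousWithinAt_const).div
      (continuousWithinAt_id.sub continuousWithinAt_const) (sub_ne_zero.2 huv.ne')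
  have hgv : g v = maxErr f u v := by simp [hg]
  have hne : (𝓝[Ioo v w] v).NeBot := by
    rw [← mem_closure_iff_nhdsWithin_neBot, closure_Ioo hvw.ne]
    exact ⟨le_refl v, hvw.le⟩
  have hev : ∀ᶠ c in 𝓝[Ioo v w] v, g c < M := by
    have ht : Tendsto g (𝓝[Ioo v w] v) (𝓝 (g v)) := hgc
    exact ht.eventually_lt_const (by rw [hgv]; exact hM)
  obtain ⟨c, hgc', hcmem⟩ := (hev.and eventually_mem_nhdsWithin).exists
  exact ⟨c, hcmem,
    lt_of_le_of_lt (maxErr_le_right_bound hconc hf hsub huv hcmem.1 hcmem.2.le) hgc'⟩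

lemma exists_left_pt (hconc : StrictConcaveOn ℝ (Icc a b) f)
    (hf : ContinuousOn f (Icc a b)) (hsub : Icc u w ⊆ Icc a b)
    (huv : u < v) (hvw : v < w) {M : ℝ} (hM : maxErr f v w < M) :
    ∃ c ∈ Ioo u v, maxErr f c w < M := by
  set g : ℝ → ℝ := fun c => maxErr f v w +
    ((f w - f c) / (w - c) - (f w - f v) / (w - v)) * (w - u) with hg
  have hvmem : v ∈ Icc a b := hsub ⟨huv.le, hvw.le⟩
  have hIoo : Ioo u v ⊆ Icc a b := fun z hz => hsub ⟨hz.1.le, (hz.2.trans hvw).le⟩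
  have hfc : ContinuousWithinAt f (Ioo u v) v :=
    (hf.continuousWithinAt hvmem).mono hIoo
  have hgc : ContinuousWithinAt g (Ioo u v) v := by
    apply ContinuousWithinAt.add continuousWithinAt_const
    apply ContinuousWithinAt.mul _ continuousWithinAt_const
    apply ContinuousWithinAt.sub _ continuousWithinAt_const
    exact (continuousWithinAt_const.sub hfc).div
      (continuousWithinAt_const.sub continuousWithinAt_id) (sub_ne_zero.2 hvw.ne')
  have hgv : g v = maxErr f v w := by simp [hg]
  have hne : (𝓝[Ioo u v] v).NeBot := by
    rw [← mem_closure_iff_nhdsWithin_neBot, closure_Ioo huv.ne]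
    exact ⟨huv.le, le_refl v⟩
  have hev : ∀ᶠ c in 𝓝[Ioo u v] v, g c < M := by
    have ht : Tendsto g (𝓝[Ioo u v] v) (𝓝 (g v)) := hgc
    exact ht.eventually_lt_const (by rw [hgv]; exact hM)
  obtain ⟨c, hgc', hcmem⟩ := (hev.and eventually_mem_nhdsWithin).exists
  exact ⟨c, hcmem,
    lt_of_le_of_lt (maxErr_le_left_bound hconc hf hsub hcmem.1.le hcmem.2 hvw) hgc'⟩

end exist

/-- All interval maximum absolute errors are equal iff every interior
breakpoint `x i` minimizes `c ↦ max (E (x (i-1)) c) (E c (x (i+1)))` over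
`(x (i-1), x (i+1))`. -/
theorem equal_errors_iff_locally_optimal (f : ℝ → ℝ) (N : ℕ) (hN : 3 ≤ N)
    (x : ℕ → ℝ)
    (hmono : ∀ i j, i < j → j ≤ N - 1 → x i < x j)
    (hf : ContinuousOn f (Set.Icc (x 0) (x (N - 1))))
    (hconc : StrictConcaveOn ℝ (Set.Icc (x 0) (x (N - 1))) f) :
    (∀ i j, i < N - 1 → j < N - 1 →
      maxErr f (x i) (x (i + 1)) = maxErr f (x j) (x (j + 1))) ↔
    (∀ i, 1 ≤ i → i ≤ N - 2 → ∀ c ∈ Set.Ioo (x (i - 1)) (x (i + 1)),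
      max (maxErr f (x (i - 1)) (x i)) (maxErr f (x i) (x (i + 1))) ≤
      max (maxErr f (x (i - 1)) c) (maxErr f c (x (i + 1)))) := by
  have hxmem : ∀ i, i ≤ N - 1 → x i ∈ Icc (x 0) (x (N - 1)) := by
    intro i hi
    constructor
    · rcases Nat.eq_zero_or_pos i with h | h
      · rw [h]
      · exact (hmono 0 i h hi).le
    · rcases eq_or_lt_of_le hi with h | h
      · rw [h]
      · exact (hmono i (N - 1) h le_rfl).le
  have hsub3 : ∀ i, 1 ≤ i → i ≤ N - 2 →
      Icc (x (i - 1)) (x (i + 1)) ⊆ Icc (x 0) (x (N - 1)) := fun i h1 h2 =>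
    Icc_subset_Icc (hxmem _ (by omega)).1 (hxmem _ (by omega)).2
  have huv : ∀ i, 1 ≤ i → i ≤ N - 2 → x (i - 1) < x i := fun i h1 h2 =>
    hmono (i - 1) i (by omega) (by omega)
  have hvw : ∀ i, 1 ≤ i → i ≤ N - 2 → x i < x (i + 1) := fun i h1 h2 =>
    hmono i (i + 1) (by omega) (by omega)
  constructor
  · intro h i h1 h2 c hc
    have key : maxErr f (x (i - 1)) (x i) = maxErr f (x i) (x (i + 1)) := by
      have := h (i - 1) i (by omega) (by omega)
      rwa [show i - 1 + 1 = i from by omega] at this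
    rcases lt_trichotomy c (x i) with hlt | heq | hgt
    · have hst : maxErr f (x i) (x (i + 1)) < maxErr f c (x (i + 1)) :=
        maxErr_lt_right hconc hf
          ((Icc_subset_Icc hc.1.le le_rfl).trans (hsub3 i h1 h2)) hlt (hvw i h1 h2)
      rw [key, max_self]
      exact le_max_of_le_right hst.le
    · rw [heq]
    · have hst : maxErr f (x (i - 1)) (x i) < maxErr f (x (i - 1)) c :=
        maxErr_lt_left hconc hf
          ((Icc_subset_Icc le_rfl hc.2.le).trans (hsub3 i h1 h2)) (huv i h1 h2) hgt
      rw [← key, max_self]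
      exact le_max_of_le_left hst.le
  · intro h
    have adj : ∀ i, 1 ≤ i → i ≤ N - 2 →
        maxErr f (x (i - 1)) (x i) = maxErr f (x i) (x (i + 1)) := by
      intro i h1 h2
      by_contra hne
      rcases lt_or_gt_of_ne hne with hlt | hgt
      · obtain ⟨c, hc, hc2⟩ := exists_right_pt hconc hf (hsub3 i h1 h2)
          (huv i h1 h2) (hvw i h1 h2) hlt
        have h3 : maxErr f c (x (i + 1)) < maxErr f (x i) (x (i + 1)) :=
          maxErr_lt_right hconc hf
            ((Icc_subset_Icc (huv i h1 h2).le le_rfl).trans (hsub3 i h1 h2)) hc.1 hc.2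
        have h4 := h i h1 h2 c ⟨(huv i h1 h2).trans hc.1, hc.2⟩
        rw [max_eq_right hlt.le] at h4
        exact absurd (h4.trans_lt (max_lt hc2 h3)) (lt_irrefl _)
      · obtain ⟨c, hc, hc2⟩ := exists_left_pt hconc hf (hsub3 i h1 h2)
          (huv i h1 h2) (hvw i h1 h2) hgt
        have h3 : maxErr f (x (i - 1)) c < maxErr f (x (i - 1)) (x i) :=
          maxErr_lt_left hconc hf
            ((Icc_subset_Icc le_rfl (hvw i h1 h2).le).trans (hsub3 i h1 h2)) hc.1 hc.2
        have h4 := h i h1 h2 c ⟨hc.1, hc.2.trans (hvw i h1 h2)⟩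
        rw [max_eq_left hgt.le] at h4
        exact absurd (h4.trans_lt (max_lt h3 hc2)) (lt_irrefl _)
    have all0 : ∀ i, i < N - 1 → maxErr f (x i) (x (i + 1)) = maxErr f (x 0) (x 1) := by
      intro i
      induction i with
      | zero => intro _; rfl
      | succ k ih =>
        intro hk
        have hadj := adj (k + 1) (by omega) (by omega)
        rw [show k + 1 - 1 = k from by omega] at hadj
        rw [← hadj]
        exact ih (by omega)
    intro i j hi hj
    rw [all0 i hi, all0 j hj]
end

section
/- Let f : ℝ → ℝ be continuous on [a,b] with a < b, and let c ∈ (a,b). Let P_c be the two-piece linear interpolant of f with breakpoint c, i.e. P_c = L_{a,c} on [a,c] and P_c = L_{c,b} on [c,b]. Then ∫_a^b (f(x) - P_c(x)) dx = ∫_a^b (f(x) - L_{a,b}(x)) dx - (1/2)·(b-a)·(f(c) - L_{a,b}(c)). In particular, for strictly concave f, the area difference error ∫_a^b (f - P_c) is minimized over c ∈ (a,b) exactly at the unique maximizer of f(x) - L_{a,b}(x) on [a,b]. -/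
/-!
The area under the secant `L_{u,v}` is the trapezoid `(v - u) (f u + f v) / 2`, so both sides
of the identity are `∫_a^b f` minus trapezoid areas, and they agree by elementary algebra. Hence
the two-piece error is an affine, strictly decreasing function of `f c - L_{a,b} c`; for strictly
concave `f` this function is strictly concave, so it has at most one maximizer.
-/

open intervalIntegral
open MeasureTheory (volume)

section

variable (f : ℝ → ℝ) (u v : ℝ)

theorem continuous_secant : Continuous (secant f u v) := by
  unfold secant
  fun_prop

theorem convexOn_secant {s : Set ℝ} (hs : Convex ℝ s) : ConvexOn ℝ s (secant f u v) := by
  refine ⟨hs, fun x _ y _ α β _ _ hαβ => le_of_eq ?_⟩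
  simp only [secant, smul_eq_mul]
  linear_combination (-(f u) + (f v - f u) / (v - u) * u) * hαβ

theorem integral_secant : ∫ x in u..v, secant f u v x = (v - u) * (f u + f v) / 2 := by
  rcases eq_or_ne u v with rfl | huv
  · simp
  have hvu : v - u ≠ 0 := sub_ne_zero.mpr huv.symm
  simp only [secant]
  rw [integral_add intervalIntegrable_const (Continuous.intervalIntegrable (by fun_prop) _ _),
    integral_const, integral_const_mul, integral_comp_sub_right (fun x => x), integral_id, smul_eq_mul]
  field_simp
  ring

variable {f u v}

theorem integral_sub_secant (hf : IntervalIntegrable f volume u v) :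
    ∫ x in u..v, (f x - secant f u v x) = (∫ x in u..v, f x) - (v - u) * (f u + f v) / 2 := by
  rw [integral_sub hf ((continuous_secant f u v).intervalIntegrable u v), integral_secant]

end

theorem integral_sub_secant_add_integral_sub_secant {f : ℝ → ℝ} {a b c : ℝ} (hab : a ≠ b)
    (hac : IntervalIntegrable f volume a c) (hcb : IntervalIntegrable f volume c b) :
    (∫ x in a..c, (f x - secant f a c x)) + (∫ x in c..b, (f x - secant f c b x)) =
      (∫ x in a..b, (f x - secant f a b x)) - (1 / 2) * (b - a) * (f c - secant f a b c) := by
  have hba : b - a ≠ 0 := sub_ne_zero.mpr hab.symm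
  rw [integral_sub_secant hac, integral_sub_secant hcb,
    integral_sub_secant (hac.trans hcb), ← integral_add_adjacent_intervals hac hcb]
  simp only [secant]
  field_simp
  ring

open intervalIntegral in
/-- Area identity for the two-piece linear interpolant and, for
strictly concave `f`, characterization of the minimizing breakpoint as the unique
maximizer of `f - L_{a,b}`. -/
theorem area_difference_identity (f : ℝ → ℝ) (a b : ℝ) (hab : a < b)
    (hf : ContinuousOn f (Set.Icc a b)) :
    (∀ c ∈ Set.Ioo a b,
      (∫ x in a..c, (f x - secant f a c x)) + (∫ x in c..b, (f x - secant f c b x)) =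
      (∫ x in a..b, (f x - secant f a b x)) - (1 / 2) * (b - a) * (f c - secant f a b c)) ∧
    (StrictConcaveOn ℝ (Set.Icc a b) f →
      ∀ c₀ ∈ Set.Ioo a b,
        IsMaxOn (fun x => f x - secant f a b x) (Set.Icc a b) c₀ →
        ∀ c ∈ Set.Ioo a b,
          ((∫ x in a..c₀, (f x - secant f a c₀ x)) + (∫ x in c₀..b, (f x - secant f c₀ b x)) ≤
           (∫ x in a..c, (f x - secant f a c x)) + (∫ x in c..b, (f x - secant f c b x))) ∧
          ((∫ x in a..c, (f x - secant f a c x)) + (∫ x in c..b, (f x - secant f c b x)) ≤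
           (∫ x in a..c₀, (f x - secant f a c₀ x)) + (∫ x in c₀..b, (f x - secant f c₀ b x)) →
            c = c₀)) := by
  have hsplit : ∀ c ∈ Set.Ioo a b,
      (∫ x in a..c, (f x - secant f a c x)) + (∫ x in c..b, (f x - secant f c b x)) =
      (∫ x in a..b, (f x - secant f a b x)) - (1 / 2) * (b - a) * (f c - secant f a b c) :=
    fun c hc => integral_sub_secant_add_integral_sub_secant hab.ne
      ((hf.mono (Set.Icc_subset_Icc_right hc.2.le)).intervalIntegrable_of_Icc hc.1.le)
      ((hf.mono (Set.Icc_subset_Icc_left hc.1.le)).intervalIntegrable_of_Icc hc.2.le)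
  refine ⟨hsplit, fun hconc c₀ hc₀ hmax c hc => ?_⟩
  have hk : 0 < (1 / 2) * (b - a) := by linarith
  rw [hsplit c hc, hsplit c₀ hc₀]
  refine ⟨sub_le_sub_left (mul_le_mul_of_nonneg_left (hmax (Set.Ioo_subset_Icc_self hc)) hk.le) _,
    fun hworse => ?_⟩
  have hmax_c : IsMaxOn (fun x => f x - secant f a b x) (Set.Icc a b) c :=
    fun x hx => (hmax hx).trans (le_of_mul_le_mul_left (by linarith) hk)
  exact (hconc.sub_convexOn (convexOn_secant f a b (convex_Icc a b))).eq_of_isMaxOn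
    hmax_c hmax (Set.Ioo_subset_Icc_self hc) (Set.Ioo_subset_Icc_self hc₀)
end
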